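/- For the twisted baker map F with M ≥ 2, every basic n-rectangle [a₀⋯a_{n−1}] = ⋂_{k=0}^{n−1} F^{-k}(X_{a_k}) has normalized Lebesgue measure 2^{-n}, for every word a₀⋯a_{n−1} ∈ {L,R}^n. -/

import Mathlib

open MeasureTheory

/-- The twisted baker map on `[-1,1] × [0,1]^{M-1}` (coordinates indexed by `Fin M`). -/
noncomputable def twistedBaker (M : ℕ) [NeZero M] (x : Fin M → ℝ) : Fin M → ℝ :=
  if x 0 < 0 then fun i => if i = 0 then 1 + 2 * x 0 else x i
  else fun i => if i = 0 then 1 - 2 * x (i - 1) else x (i - 1)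

/-- The phase space `X = [-1,1] × [0,1]^{M-1}`. -/
def bakerSpace (M : ℕ) [NeZero M] : Set (Fin M → ℝ) :=
  {x | x 0 ∈ Set.Icc (-1 : ℝ) 1 ∧ ∀ i : Fin M, i ≠ 0 → x i ∈ Set.Icc (0 : ℝ) 1}

/-- The left half `X_L = {x ∈ X : x₁ < 0}`. -/
def bakerL (M : ℕ) [NeZero M] : Set (Fin M → ℝ) := {x ∈ bakerSpace M | x 0 < 0}

/-- The right half `X_R = {x ∈ X : x₁ ≥ 0}`. -/
def bakerR (M : ℕ) [NeZero M] : Set (Fin M → ℝ) := {x ∈ bakerSpace M | 0 ≤ x 0}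

/-- Normalized Lebesgue measure on `X`. -/
noncomputable def bakerMeasure (M : ℕ) [NeZero M] : Measure (Fin M → ℝ) :=
  (volume (bakerSpace M))⁻¹ • volume.restrict (bakerSpace M)

variable (M : ℕ) [NeZero M]

lemma measurable_twistedBaker : Measurable (twistedBaker M) := by
  unfold twistedBaker
  apply Measurable.ite (measurableSet_lt (measurable_pi_apply 0) measurable_const)
  · exact measurable_pi_lambda _ fun i => by
      split <;> [exact measurable_const.add (measurable_const.mul (measurable_pi_apply 0));
        exact measurable_pi_apply i]
  · exact measurable_pi_lambda _ fun i => by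
      split <;> [exact measurable_const.sub (measurable_const.mul (measurable_pi_apply _));
        exact measurable_pi_apply _]

lemma bakerSpace_eq : bakerSpace M =
    Set.pi Set.univ (fun i => if i = 0 then Set.Icc (-1 : ℝ) 1 else Set.Icc 0 1) := by
  ext x
  simp only [bakerSpace, Set.mem_setOf_eq, Set.mem_pi, Set.mem_univ, forall_true_left]
  constructor
  · rintro ⟨h0, hi⟩ i
    by_cases h : i = 0
    · subst h; simpa using h0
    · simpa [h] using hi i h
  · intro h
    refine ⟨by simpa using h 0, fun i hi => by simpa [hi] using h i⟩

lemma measurableSet_bakerSpace : MeasurableSet (bakerSpace M) := by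
  rw [bakerSpace_eq]
  exact MeasurableSet.univ_pi fun i => by split <;> exact measurableSet_Icc

lemma measurableSet_bakerL : MeasurableSet (bakerL M) :=
  (measurableSet_bakerSpace M).inter (measurableSet_lt (measurable_pi_apply 0) measurable_const)

lemma measurableSet_bakerR : MeasurableSet (bakerR M) :=
  (measurableSet_bakerSpace M).inter (measurableSet_le measurable_const (measurable_pi_apply 0))

lemma volume_bakerSpace : volume (bakerSpace M) = 2 := by
  rw [bakerSpace_eq, volume_pi_pi]
  rw [Finset.prod_eq_single 0 (fun i _ hi => by simp [hi]) (by simp)]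
  simp [Real.volume_Icc]
  norm_num

lemma bakerL_eq : bakerL M =
    Set.pi Set.univ (fun i => if i = 0 then Set.Ico (-1 : ℝ) 0 else Set.Icc 0 1) := by
  ext x
  simp only [bakerL, Set.mem_setOf_eq, bakerSpace_eq, Set.mem_pi, Set.mem_univ, forall_true_left,
    Set.mem_sep_iff]
  constructor
  · rintro ⟨h, h0⟩ i
    by_cases hi : i = 0
    · subst hi
      have := h 0; simp only [if_pos rfl] at this
      simpa using ⟨this.1, h0⟩
    · simpa [hi] using h i
  · intro h
    have h0 := h 0; simp only [if_pos rfl] at h0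
    refine ⟨fun i => ?_, h0.2⟩
    by_cases hi : i = 0
    · subst hi; simpa using ⟨h0.1, h0.2.le.trans one_pos.le⟩
    · simpa [hi] using h i

lemma bakerR_eq : bakerR M =
    Set.pi Set.univ (fun i => if i = 0 then Set.Icc (0 : ℝ) 1 else Set.Icc 0 1) := by
  ext x
  simp only [bakerR, Set.mem_setOf_eq, bakerSpace_eq, Set.mem_pi, Set.mem_univ, forall_true_left,
    Set.mem_sep_iff]
  constructor
  · rintro ⟨h, h0⟩ i
    by_cases hi : i = 0
    · subst hi
      have := h 0; simp only [if_pos rfl] at this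
      simpa using ⟨h0, this.2⟩
    · simpa [hi] using h i
  · intro h
    have h0 := h 0; simp only [if_pos rfl] at h0
    refine ⟨fun i => ?_, h0.1⟩
    by_cases hi : i = 0
    · subst hi; simpa using ⟨(neg_nonpos.mpr one_pos.le).trans h0.1, h0.2⟩
    · simpa [hi] using h i

lemma volume_bakerL : volume (bakerL M) = 1 := by
  rw [bakerL_eq, volume_pi_pi,
    Finset.prod_eq_single 0 (fun i _ hi => by simp [hi]) (by simp)]
  simp [Real.volume_Ico]

lemma volume_bakerR : volume (bakerR M) = 1 := by
  rw [bakerR_eq, volume_pi_pi,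
    Finset.prod_eq_single 0 (fun i _ hi => by simp [hi]) (by simp)]
  simp [Real.volume_Icc]

lemma volume_hyperplane : volume {y : Fin M → ℝ | y 0 = 1} = 0 := by
  have : {y : Fin M → ℝ | y 0 = 1} =
      Set.pi Set.univ (fun i => if i = 0 then ({1} : Set ℝ) else Set.univ) := by
    ext y
    simp only [Set.mem_setOf_eq, Set.mem_pi, Set.mem_univ, forall_true_left]
    constructor
    · intro h i; by_cases hi : i = 0 <;> simp [hi, h]
    · intro h; simpa using h 0
  rw [this, volume_pi_pi]
  exact Finset.prod_eq_zero (Finset.mem_univ 0) (by simp)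

lemma volume_L_inter (B : Set (Fin M → ℝ)) (hB : MeasurableSet B) (hBX : B ⊆ bakerSpace M) :
    volume (bakerL M ∩ twistedBaker M ⁻¹' B) = 2⁻¹ * volume B := by
  classical
  set A := Matrix.toLin' (Matrix.diagonal fun i : Fin M => if i = 0 then (2:ℝ) else 1) with hA
  set c : Fin M → ℝ := fun i => if i = 0 then 1 else 0 with hc
  have hAx : ∀ (x : Fin M → ℝ) (i : Fin M), A x i = (if i = 0 then 2 else 1) * x i := by
    intro x i
    simp [hA, Matrix.toLin'_apply, Matrix.mulVec_diagonal]
  have hdet : LinearMap.det A = 2 := by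
    rw [hA, LinearMap.det_toLin', Matrix.det_diagonal,
      Finset.prod_eq_single 0 (fun i _ hi => by simp [hi]) (by simp)]
    simp
  set S := B ∩ {y : Fin M → ℝ | y 0 < 1} with hS
  have hFeq : ∀ x : Fin M → ℝ, x 0 < 0 → twistedBaker M x = c + A x := by
    intro x hx0
    funext i
    by_cases hi : i = 0
    · subst hi
      simp only [twistedBaker, if_pos hx0, Pi.add_apply, hAx, hc]
      norm_num
    · simp only [twistedBaker, if_pos hx0, Pi.add_apply, hAx, hc, if_neg hi]
      ring
  have hset : bakerL M ∩ twistedBaker M ⁻¹' B = (fun x => c + A x) ⁻¹' S := by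
    ext x
    constructor
    · rintro ⟨⟨hx, hx0⟩, hFx⟩
      refine ⟨show c + A x ∈ B from hFeq x hx0 ▸ hFx, show (c + A x) 0 < 1 from ?_⟩
      simp only [Pi.add_apply, hAx, hc]
      norm_num
      linarith
    · rintro ⟨hyB, hy1⟩
      replace hyB : c + A x ∈ B := hyB
      replace hy1 : (c + A x) 0 < 1 := hy1
      have hy0 : (c + A x) 0 = 1 + 2 * x 0 := by
        simp only [Pi.add_apply, hAx, hc]; norm_num; try ring
      have hyX := hBX hyB
      rw [hy0] at hy1
      have hx0 : x 0 < 0 := by linarith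
      have hxm1 : -1 ≤ x 0 := by
        have := hyX.1.1; rw [hy0] at this; linarith
      have hxi : ∀ i : Fin M, i ≠ 0 → x i ∈ Set.Icc (0:ℝ) 1 := by
        intro i hi
        have := hyX.2 i hi
        simpa [Pi.add_apply, hAx, hc, hi] using this
      exact ⟨⟨⟨⟨hxm1, by linarith⟩, hxi⟩, hx0⟩,
        show twistedBaker M x ∈ B by rw [hFeq x hx0]; exact hyB⟩
  have hvolS : volume S = volume B := by
    refine le_antisymm (measure_mono Set.inter_subset_left) ?_
    have hsub : B ⊆ S ∪ {y : Fin M → ℝ | y 0 = 1} := by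
      intro y hy
      by_cases h : y 0 < 1
      · exact Or.inl ⟨hy, h⟩
      · exact Or.inr (le_antisymm ((hBX hy).1.2) (not_lt.mp h))
    calc volume B ≤ volume S + volume {y : Fin M → ℝ | y 0 = 1} :=
          le_trans (measure_mono hsub) (measure_union_le _ _)
      _ = volume S := by rw [volume_hyperplane]; simp
  have hpre : (fun x => c + A x) ⁻¹' S = A ⁻¹' ((c + ·) ⁻¹' S) := rfl
  rw [hset, hpre, Measure.addHaar_preimage_linearMap volume (by rw [hdet]; norm_num),
    measure_preimage_add, hdet, hvolS]
  rw [show |(2:ℝ)⁻¹| = 1/2 from by norm_num, show ((1:ℝ)/2) = 1/2 from rfl,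
    ENNReal.ofReal_div_of_pos (by norm_num), ENNReal.ofReal_one, ENNReal.ofReal_ofNat, one_div]

lemma volume_R_inter (hM : 2 ≤ M) (B : Set (Fin M → ℝ)) (hB : MeasurableSet B)
    (hBX : B ⊆ bakerSpace M) :
    volume (bakerR M ∩ twistedBaker M ⁻¹' B) = 2⁻¹ * volume B := by
  classical
  have h1 : (1 : Fin M) ≠ 0 := by
    intro h
    apply_fun Fin.val at h
    rw [Fin.val_one', Fin.val_zero, Nat.mod_eq_of_lt (by omega)] at h
    exact one_ne_zero h
  set T := MeasurableEquiv.piCongrLeft (fun _ : Fin M => ℝ) (Equiv.addRight (1 : Fin M)) with hT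
  have hTx : ∀ (x : Fin M → ℝ) (i : Fin M), T x i = x (i - 1) := by
    intro x i
    simp [hT, MeasurableEquiv.piCongrLeft, Equiv.piCongrLeft_apply_apply, sub_eq_add_neg]
    rw [Equiv.piCongrLeft_apply_eq_cast]; simp [sub_eq_add_neg]
  set D := Matrix.toLin' (Matrix.diagonal fun i : Fin M => if i = 0 then (-2:ℝ) else 1) with hD
  set c : Fin M → ℝ := fun i => if i = 0 then 1 else 0 with hc
  have hDx : ∀ (y : Fin M → ℝ) (i : Fin M), D y i = (if i = 0 then -2 else 1) * y i := by
    intro y i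
    simp [hD, Matrix.toLin'_apply, Matrix.mulVec_diagonal]
  have hdet : LinearMap.det D = -2 := by
    rw [hD, LinearMap.det_toLin', Matrix.det_diagonal,
      Finset.prod_eq_single 0 (fun i _ hi => by simp [hi]) (by simp)]
    simp
  have hg : ∀ (x : Fin M → ℝ) (i : Fin M),
      (c + D (T x)) i = if i = 0 then 1 - 2 * x (i - 1) else x (i - 1) := by
    intro x i
    by_cases hi : i = 0
    · subst hi
      simp only [Pi.add_apply, hDx, hTx, hc]
      norm_num
      try ring
    · simp only [Pi.add_apply, hDx, hTx, hc, if_neg hi]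
      ring
  have hFeq : ∀ x : Fin M → ℝ, ¬ x 0 < 0 → twistedBaker M x = c + D (T x) := by
    intro x hx0
    funext i
    rw [hg]
    simp [twistedBaker, if_neg hx0]
  have hset : bakerR M ∩ twistedBaker M ⁻¹' B = (fun x => c + D (T x)) ⁻¹' B := by
    ext x
    constructor
    · rintro ⟨⟨hx, hx0⟩, hFx⟩
      exact show c + D (T x) ∈ B from hFeq x (not_lt.mpr hx0) ▸ hFx
    · intro hyB
      replace hyB : c + D (T x) ∈ B := hyB
      have hyX := hBX hyB
      have hy0 := hyX.1
      rw [hg, if_pos rfl, Set.mem_Icc] at hy0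
      have hxj : ∀ j : Fin M, x j ∈ Set.Icc (0:ℝ) 1 := by
        intro j
        by_cases hj : j + 1 = 0
        · have hjm : j = 0 - 1 := by rw [← hj]; exact (add_sub_cancel_right j 1).symm
          rw [hjm]
          constructor
          · have := hy0.2; linarith
          · have := hy0.1; linarith
        · have := hyX.2 (j + 1) hj
          rw [hg, if_neg hj, add_sub_cancel_right] at this
          exact this
      have hx0 : 0 ≤ x 0 := (hxj 0).1
      have hxX : x ∈ bakerSpace M :=
        ⟨⟨le_trans (by norm_num) hx0, (hxj 0).2⟩, fun i _ => hxj i⟩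
      exact ⟨⟨hxX, hx0⟩, show twistedBaker M x ∈ B by
        rw [hFeq x (not_lt.mpr hx0)]; exact hyB⟩
  have hDmeas : Measurable (D : (Fin M → ℝ) → (Fin M → ℝ)) :=
    D.continuous_of_finiteDimensional.measurable
  have hmeas : MeasurableSet (D ⁻¹' ((c + ·) ⁻¹' B)) :=
    hDmeas ((measurable_const_add c).comp measurable_id hB)
  have hpre : (fun x => c + D (T x)) ⁻¹' B = T ⁻¹' (D ⁻¹' ((c + ·) ⁻¹' B)) := rfl
  rw [hset, hpre,
    (volume_measurePreserving_piCongrLeft (fun _ : Fin M => ℝ)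
      (Equiv.addRight (1 : Fin M))).measure_preimage hmeas.nullMeasurableSet,
    Measure.addHaar_preimage_linearMap volume (by rw [hdet]; norm_num),
    measure_preimage_add, hdet]
  rw [show |((-2:ℝ))⁻¹| = 1/2 from by norm_num,
    ENNReal.ofReal_div_of_pos (by norm_num), ENNReal.ofReal_one, ENNReal.ofReal_ofNat, one_div]

lemma rect_measurable (n : ℕ) (a : Fin n → Bool) :
    MeasurableSet (⋂ k : Fin n,
      (twistedBaker M)^[(k : ℕ)] ⁻¹' (if a k then bakerR M else bakerL M)) := by
  refine MeasurableSet.iInter fun k => ?_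
  refine ((measurable_twistedBaker M).iterate _) ?_
  split
  · exact measurableSet_bakerR M
  · exact measurableSet_bakerL M

lemma rect_subset (n : ℕ) (a : Fin (n+1) → Bool) :
    (⋂ k : Fin (n+1),
      (twistedBaker M)^[(k : ℕ)] ⁻¹' (if a k then bakerR M else bakerL M)) ⊆ bakerSpace M := by
  refine le_trans (Set.iInter_subset _ 0) ?_
  simp only [Fin.val_zero, Function.iterate_zero, Set.preimage_id]
  split
  · exact fun x hx => hx.1
  · exact fun x hx => hx.1

lemma volume_rect (hM : 2 ≤ M) : ∀ n (a : Fin (n+1) → Bool),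
    volume (⋂ k : Fin (n+1),
      (twistedBaker M)^[(k : ℕ)] ⁻¹' (if a k then bakerR M else bakerL M))
      = 2 * 2⁻¹ ^ (n+1) := by
  intro n
  induction n with
  | zero =>
    intro a
    have huniq : (⋂ k : Fin 1,
        (twistedBaker M)^[(k : ℕ)] ⁻¹' (if a k then bakerR M else bakerL M))
        = (twistedBaker M)^[((0 : Fin 1) : ℕ)] ⁻¹' (if a 0 then bakerR M else bakerL M) :=
      Set.eq_of_subset_of_subset (Set.iInter_subset _ 0)
        (Set.subset_iInter fun k => by rw [Subsingleton.elim (0 : Fin 1) k])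
    rw [huniq]
    simp only [Fin.val_zero, Function.iterate_zero, Set.preimage_id]
    cases h : a 0
    · rw [if_neg (by simp [h]), volume_bakerL, pow_one,
        ENNReal.mul_inv_cancel (by norm_num) (by norm_num)]
    · rw [if_pos rfl, volume_bakerR, pow_one,
        ENNReal.mul_inv_cancel (by norm_num) (by norm_num)]
  | succ n ih =>
    intro a
    set b : Fin (n+1) → Bool := fun k => a k.succ with hb
    set B := ⋂ k : Fin (n+1),
      (twistedBaker M)^[(k : ℕ)] ⁻¹' (if b k then bakerR M else bakerL M) with hB
    have hsplit : (⋂ k : Fin (n+2),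
        (twistedBaker M)^[(k : ℕ)] ⁻¹' (if a k then bakerR M else bakerL M))
        = (if a 0 then bakerR M else bakerL M) ∩ twistedBaker M ⁻¹' B := by
      ext x
      simp only [Set.mem_iInter, Set.mem_inter_iff, hB, Set.mem_preimage]
      constructor
      · intro h
        refine ⟨by simpa using h 0, fun k => ?_⟩
        have := h k.succ
        simp only [Set.mem_preimage, Fin.val_succ, Function.iterate_succ_apply] at this
        exact this
      · rintro ⟨h0, h⟩ k
        refine Fin.cases ?_ (fun k => ?_) k
        · simpa using h0
        · have := h k
          simp only [Set.mem_preimage, Fin.val_succ, Function.iterate_succ_apply]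
          exact this
    have hBmeas := rect_measurable M (n+1) b
    have hBsub := rect_subset M n b
    rw [hsplit]
    have hvol : volume ((if a 0 then bakerR M else bakerL M) ∩ twistedBaker M ⁻¹' B)
        = 2⁻¹ * volume B := by
      cases h : a 0
      · rw [if_neg (by simp [h])]
        exact volume_L_inter M B hBmeas hBsub
      · rw [if_pos rfl]
        exact volume_R_inter M hM B hBmeas hBsub
    rw [hvol, ih b]
    ring

/-- Every basic n-rectangle has normalized Lebesgue measure `2^{-n}`.
Here a word in `{L,R}^n` is encoded as `a : Fin n → Bool`, with `true = R`. -/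
theorem measure_basic_rectangle (M : ℕ) [NeZero M] (hM : 2 ≤ M) (n : ℕ) (hn : 1 ≤ n)
    (a : Fin n → Bool) :
    bakerMeasure M
      (⋂ k : Fin n, (twistedBaker M)^[(k : ℕ)] ⁻¹' (if a k then bakerR M else bakerL M))
      = (2 : ENNReal)⁻¹ ^ n := by
  obtain ⟨m, rfl⟩ : ∃ m, n = m + 1 := ⟨n - 1, by omega⟩
  have hmeas := rect_measurable M (m+1) a
  have hsub := rect_subset M m a
  rw [bakerMeasure, Measure.smul_apply, Measure.restrict_apply hmeas,
    Set.inter_eq_self_of_subset_left hsub, volume_bakerSpace, smul_eq_mul, volume_rect M hM m a,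
    ← mul_assoc, ENNReal.inv_mul_cancel (by norm_num) (by norm_num), one_mul]
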